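/- Let n ≥ 1, let p_1, …, p_n be the n distinct complex roots of f_n, set α_j = 1/n for j = 1,…,n, α_{n+1} = −1, p_{n+1} = 1, and for each k ∈ {1,…,n+1} let r_k > 0 be small enough that the closed disc of radius r_k about p_k contains none of the other points p_j and not 0. Then for every k ∈ {1,…,n+1}, the circle integral ∮_{|z−p_k|=r_k} z·(∑_{j=1}^{n+1} α_j/(z−p_j))² dz = 0. -/

import Mathlib

/-!
Split off the pole at `p k`: the integrand is `z * (α k / (z - p k) + h z) ^ 2` with `h`
holomorphic on the disc, so the Cauchy formula for the first derivative gives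
`2πi · α k · (α k + 2 p k h (p k))`, and it remains to see that the second factor vanishes.

At `p (n+1) = 1` this says `∑ 1 / (1 - p j) = f_n'(1) / f_n(1) = n / 2`, which is the symmetry
`binom(n, j) = binom(n, n - j)`. At a root `c = p k` of `f_n` it says, since
`f_n''(c) = 2 f_n'(c) ∑_{j ≠ k} 1 / (c - p j)`, that `(c - 1) (f_n'(c) + c f_n''(c))` equals
`2 n c f_n'(c)`: this is the hypergeometric equation `θ² f_n = z (θ - n)² f_n`, `θ = z d/dz`,
evaluated at `c`.
-/

open Polynomial

noncomputable def hyperPoly (n : ℕ) : Polynomial ℂ :=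
  ∑ j ∈ Finset.range (n + 1), Polynomial.C ((n.choose j : ℂ) ^ 2) * Polynomial.X ^ j

namespace Polynomial

section Semiring

variable {R : Type*} [Semiring R]

noncomputable def eulerOp (p : R[X]) : R[X] := X * derivative p

theorem coeff_eulerOp (p : R[X]) (j : ℕ) : (eulerOp p).coeff j = j * p.coeff j := by
  cases j with
  | zero => simp [eulerOp]
  | succ j => rw [eulerOp, coeff_X_mul, coeff_derivative, Nat.cast_comm, Nat.cast_succ]

end Semiring

section CommSemiring

variable {R : Type*} [CommSemiring R]

theorem eval_eulerOp (p : R[X]) (z : R) : (eulerOp p).eval z = z * (derivative p).eval z := by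
  simp [eulerOp]

theorem eval_eulerOp_eulerOp (p : R[X]) (z : R) :
    (eulerOp (eulerOp p)).eval z
      = z * ((derivative p).eval z + z * (derivative (derivative p)).eval z) := by
  simp [eulerOp, derivative_mul]

end CommSemiring

section Field

variable {K ι : Type*} [Field K] [DecidableEq ι] {s : Finset ι} {q : ι → K}

theorem eval_derivative_prod_X_sub_C {z : K} (hz : ∀ i ∈ s, z ≠ q i) :
    (derivative (∏ i ∈ s, (X - C (q i)))).eval z
      = (∏ i ∈ s, (z - q i)) * ∑ i ∈ s, (z - q i)⁻¹ := by
  simp only [derivative_prod_finset, derivative_X_sub_C, mul_one, eval_finsetSum, eval_prod,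
    eval_sub, eval_X, eval_C, Finset.mul_sum]
  refine Finset.sum_congr rfl fun i hi => ?_
  rw [← Finset.mul_prod_erase s _ hi, mul_comm (z - q i), mul_assoc,
    mul_inv_cancel₀ (sub_ne_zero.mpr (hz i hi)), mul_one]

theorem eval_derivative_prod_X_sub_C_of_mem {k : ι} (hk : k ∈ s) :
    (derivative (∏ i ∈ s, (X - C (q i)))).eval (q k) = ∏ i ∈ s.erase k, (q k - q i) := by
  rw [← Finset.mul_prod_erase s _ hk]
  simp [derivative_mul, eval_prod]

theorem eval_derivative_derivative_prod_X_sub_C_of_mem {k : ι} (hk : k ∈ s)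
    (hq : ∀ i ∈ s.erase k, q k ≠ q i) :
    (derivative (derivative (∏ i ∈ s, (X - C (q i))))).eval (q k)
      = 2 * (∏ i ∈ s.erase k, (q k - q i)) * ∑ i ∈ s.erase k, (q k - q i)⁻¹ := by
  rw [← Finset.mul_prod_erase s _ hk]
  simp only [derivative_mul, derivative_X_sub_C, one_mul, derivative_add, zero_mul, eval_add,
    eval_mul, eval_sub, eval_X, eval_C, sub_self, eval_derivative_prod_X_sub_C hq]
  ring

end Field

end Polynomial

theorem succ_mul_choose_succ_eq_sub_mul_choose {R : Type*} [CommRing R] (n j : ℕ) :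
    ((j : R) + 1) * n.choose (j + 1) = ((n : R) - j) * n.choose j := by
  rcases le_or_gt j n with hj | hj
  · have := congrArg (Nat.cast : ℕ → R) (Nat.choose_succ_right_eq n j)
    push_cast [Nat.cast_sub hj] at this
    linear_combination this
  · simp [Nat.choose_eq_zero_of_lt hj, Nat.choose_eq_zero_of_lt (hj.trans (Nat.lt_succ_self j))]

theorem two_mul_sum_range_choose_sq_mul (n : ℕ) :
    2 * ∑ j ∈ Finset.range (n + 1), n.choose j ^ 2 * j
      = n * ∑ j ∈ Finset.range (n + 1), n.choose j ^ 2 := by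
  have hreflect : ∑ j ∈ Finset.range (n + 1), n.choose j ^ 2 * j
      = ∑ j ∈ Finset.range (n + 1), n.choose j ^ 2 * (n - j) := by
    rw [← Finset.sum_range_reflect]
    refine Finset.sum_congr rfl fun j hj => ?_
    rw [Nat.add_sub_cancel, Nat.choose_symm (Finset.mem_range_succ_iff.mp hj)]
  rw [two_mul]
  nth_rewrite 2 [hreflect]
  rw [← Finset.sum_add_distrib, Finset.mul_sum]
  refine Finset.sum_congr rfl fun j hj => ?_
  rw [← mul_add, Nat.add_sub_cancel' (Finset.mem_range_succ_iff.mp hj), mul_comm]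

theorem coeff_hyperPoly (n j : ℕ) : (hyperPoly n).coeff j = (n.choose j : ℂ) ^ 2 := by
  simp only [hyperPoly, finsetSum_coeff, coeff_C_mul_X_pow]
  rw [Finset.sum_ite_eq]
  split_ifs with h
  · rfl
  · simp [Nat.choose_eq_zero_of_lt (by simpa using h : n < j)]

theorem eval_zero_hyperPoly (n : ℕ) : (hyperPoly n).eval 0 = 1 := by
  rw [← coeff_zero_eq_eval_zero, coeff_hyperPoly]
  simp

theorem eval_one_hyperPoly (n : ℕ) : (hyperPoly n).eval 1 = (2 * n).choose n := by
  simp [hyperPoly, eval_finsetSum, ← Nat.sum_range_choose_sq]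

theorem two_mul_eval_one_derivative_hyperPoly (n : ℕ) :
    2 * (derivative (hyperPoly n)).eval 1 = n * (hyperPoly n).eval 1 := by
  rw [hyperPoly, derivative_sum]
  simp only [derivative_C_mul_X_pow]
  simp only [map_mul, map_pow, map_natCast, eval_finsetSum, eval_mul, eval_pow, eval_natCast,
    eval_X, one_pow, mul_one]
  exact_mod_cast two_mul_sum_range_choose_sq_mul n

theorem eulerOp_eulerOp_hyperPoly (n : ℕ) :
    eulerOp (eulerOp (hyperPoly n)) = X * (eulerOp (eulerOp (hyperPoly n))
      - C (2 * n : ℂ) * eulerOp (hyperPoly n) + C ((n : ℂ) ^ 2) * hyperPoly n) := by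
  ext j
  cases j with
  | zero => simp [coeff_eulerOp]
  | succ j =>
    simp only [coeff_X_mul, coeff_sub, coeff_add, coeff_C_mul, coeff_eulerOp, coeff_hyperPoly]
    push_cast
    linear_combination (((j : ℂ) + 1) * n.choose (j + 1) + ((n : ℂ) - j) * n.choose j)
      * succ_mul_choose_succ_eq_sub_mul_choose (R := ℂ) n j

theorem hyperPoly_root_relation {n : ℕ} {ι : Type*} [DecidableEq ι] {s : Finset ι} {q : ι → ℂ}
    (hf : hyperPoly n = ∏ i ∈ s, (X - C (q i))) (hq : Set.InjOn q s) {k : ι} (hk : k ∈ s) :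
    (q k - 1) * (1 + 2 * q k * ∑ i ∈ s.erase k, (q k - q i)⁻¹) = 2 * n * q k := by
  set c := q k
  have hroot : (hyperPoly n).eval c = 0 := by
    rw [hf, eval_prod]
    exact Finset.prod_eq_zero hk (by simp [c])
  have hc0 : c ≠ 0 := by
    rintro h
    rw [h, eval_zero_hyperPoly] at hroot
    exact one_ne_zero hroot
  have hc1 : c ≠ 1 := by
    rintro h
    rw [h, eval_one_hyperPoly] at hroot
    exact (Nat.cast_ne_zero.mpr (Nat.choose_pos (by omega)).ne') hroot
  have hne : ∀ i ∈ s.erase k, c ≠ q i := fun i hi h =>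
    Finset.ne_of_mem_erase hi (hq (Finset.mem_of_mem_erase hi) hk h.symm)
  have hderiv_ne : ∏ i ∈ s.erase k, (c - q i) ≠ 0 :=
    Finset.prod_ne_zero_iff.mpr fun i hi => sub_ne_zero.mpr (hne i hi)
  have hode := congrArg (eval c) (eulerOp_eulerOp_hyperPoly n)
  simp only [eval_mul, eval_sub, eval_add, eval_X, eval_C, hroot] at hode
  rw [eval_eulerOp_eulerOp, eval_eulerOp, hf, eval_derivative_prod_X_sub_C_of_mem hk,
    eval_derivative_derivative_prod_X_sub_C_of_mem hk hne] at hode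
  refine mul_left_cancel₀ (mul_ne_zero hc0 hderiv_ne) ?_
  linear_combination -hode

theorem hyperPoly_two_mul_sum_inv_one_sub {n : ℕ} {ι : Type*} [DecidableEq ι] {s : Finset ι}
    {q : ι → ℂ} (hf : hyperPoly n = ∏ i ∈ s, (X - C (q i))) :
    2 * ∑ i ∈ s, (1 - q i)⁻¹ = n := by
  have hval_ne : ∏ i ∈ s, (1 - q i) ≠ 0 := by
    have hval := eval_one_hyperPoly n
    rw [hf, eval_prod] at hval
    simp only [eval_sub, eval_X, eval_C] at hval
    rw [hval]
    exact Nat.cast_ne_zero.mpr (Nat.choose_pos (by omega)).ne'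
  have hne : ∀ i ∈ s, (1 : ℂ) ≠ q i := fun i hi h =>
    hval_ne (Finset.prod_eq_zero hi (sub_eq_zero.mpr h))
  have hderiv := two_mul_eval_one_derivative_hyperPoly n
  rw [hf, eval_derivative_prod_X_sub_C hne, eval_prod] at hderiv
  simp only [eval_sub, eval_X, eval_C] at hderiv
  exact mul_left_cancel₀ hval_ne (by linear_combination hderiv)

open Complex Metric Real

theorem circleIntegral_mul_sq_div_sub_add {c : ℂ} {R : ℝ} (hR : 0 < R) {h : ℂ → ℂ}
    (hh : DifferentiableOn ℂ h (closedBall c R)) (a : ℂ) :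
    (∮ z in C(c, R), z * (a / (z - c) + h z) ^ 2) = 2 * π * I * (a * (a + 2 * c * h c)) := by
  set G : ℂ → ℂ := fun z => z * (a + (z - c) * h z) ^ 2
  have hG : DifferentiableOn ℂ G (closedBall c R) :=
    differentiableOn_id.mul (((differentiableOn_const a).add
      ((differentiableOn_id.sub_const c).mul hh)).pow 2)
  have hG' : HasDerivAt G (a * (a + 2 * c * h c)) c := by
    have hhc := (hh.differentiableAt (closedBall_mem_nhds c hR)).hasDerivAt
    refine ((hasDerivAt_id' c).fun_mul
      ((((hasDerivAt_id' c).sub_const c).fun_mul hhc).const_add a |>.fun_pow 2)).congr_deriv ?_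
    simp only [sub_self, zero_mul, add_zero, one_mul, Nat.cast_ofNat, Nat.add_one_sub_one, pow_one]
    ring
  have hpole : Set.EqOn (fun z => z * (a / (z - c) + h z) ^ 2)
      (fun z => (1 / (z - c) ^ 2) • G z) (sphere c R) := by
    intro z hz
    have hzc : z - c ≠ 0 := sub_ne_zero.mpr (ne_of_mem_sphere hz hR.ne')
    simp only [G, smul_eq_mul]
    field_simp
  rw [circleIntegral.integral_congr hR.le hpole, hG.deriv_eq_smul_circleIntegral hR, hG'.deriv,
    smul_eq_mul]

theorem hyperPoly_residue_eq_zero (n : ℕ) (hn : 1 ≤ n) (p : Fin (n + 1) → ℂ)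
    (α : Fin (n + 1) → ℂ) (hp : Function.Injective p)
    (hroots : hyperPoly n
      = ∏ j ∈ Finset.univ.erase (Fin.last n), (Polynomial.X - Polynomial.C (p j)))
    (hplast : p (Fin.last n) = 1)
    (hα : ∀ j : Fin (n + 1), j ≠ Fin.last n → α j = 1 / (n : ℂ))
    (hαlast : α (Fin.last n) = -1) (k : Fin (n + 1)) :
    α k + 2 * p k * ∑ j ∈ Finset.univ.erase k, α j / (p k - p j) = 0 := by
  have hn0 : (n : ℂ) ≠ 0 := Nat.cast_ne_zero.mpr (by omega)
  have hαroots : ∀ (t : Finset (Fin (n + 1))) (z : ℂ), Fin.last n ∉ t →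
      ∑ j ∈ t, α j / (z - p j) = 1 / n * ∑ j ∈ t, (z - p j)⁻¹ := by
    intro t z ht
    rw [Finset.mul_sum]
    refine Finset.sum_congr rfl fun j hj => ?_
    rw [hα j (ne_of_mem_of_not_mem hj ht), div_eq_mul_inv]
  by_cases hk : k = Fin.last n
  · subst hk
    have hsum := hyperPoly_two_mul_sum_inv_one_sub hroots
    rw [hαlast, hplast, hαroots _ _ (Finset.notMem_erase _ _)]
    generalize ∑ j ∈ Finset.univ.erase (Fin.last n), (1 - p j)⁻¹ = S at hsum ⊢
    field_simp
    linear_combination hsum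
  · have hks : k ∈ Finset.univ.erase (Fin.last n) := Finset.mem_erase.mpr ⟨hk, Finset.mem_univ k⟩
    have hrel := hyperPoly_root_relation hroots hp.injOn hks
    have hk1 : p k - 1 ≠ 0 := by
      rw [← hplast]
      exact sub_ne_zero.mpr (hp.ne hk)
    rw [← Finset.add_sum_erase _ _ (Finset.mem_erase.mpr ⟨Ne.symm hk, Finset.mem_univ _⟩),
      Finset.erase_right_comm,
      hαroots _ _ fun h => Finset.notMem_erase _ _ (Finset.mem_of_mem_erase h),
      hα k hk, hαlast, hplast]
    generalize ∑ j ∈ (Finset.univ.erase (Fin.last n)).erase k, (p k - p j)⁻¹ = S at hrel ⊢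
    field_simp
    linear_combination hrel

theorem stmt_16_general (n : ℕ) (hn : 1 ≤ n)
    (p : Fin (n + 1) → ℂ) (α : Fin (n + 1) → ℂ)
    (hp : Function.Injective p)
    (hroots : hyperPoly n
      = ∏ j ∈ Finset.univ.erase (Fin.last n), (Polynomial.X - Polynomial.C (p j)))
    (hplast : p (Fin.last n) = 1)
    (hα : ∀ j : Fin (n + 1), j ≠ Fin.last n → α j = 1 / (n : ℂ))
    (hαlast : α (Fin.last n) = -1)
    (r : Fin (n + 1) → ℝ) (hr : ∀ k, 0 < r k)
    (hdisc : ∀ k j, j ≠ k → p j ∉ Metric.closedBall (p k) (r k))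
    (k : Fin (n + 1)) :
    (∮ z in C(p k, r k), z * (∑ j, α j / (z - p j)) ^ 2) = 0 := by
  have hsplit : ∀ z, ∑ j, α j / (z - p j)
      = α k / (z - p k) + ∑ j ∈ Finset.univ.erase k, α j / (z - p j) := fun z =>
    (Finset.add_sum_erase _ _ (Finset.mem_univ k)).symm
  have hhol : DifferentiableOn ℂ (fun z => ∑ j ∈ Finset.univ.erase k, α j / (z - p j))
      (closedBall (p k) (r k)) := by
    refine DifferentiableOn.fun_sum fun j hj => ?_
    refine (differentiableOn_const _).div (differentiableOn_id.sub_const _) fun z hz h => ?_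
    exact hdisc k j (Finset.ne_of_mem_erase hj) (sub_eq_zero.mp h ▸ hz)
  simp_rw [hsplit]
  rw [circleIntegral_mul_sq_div_sub_add (hr k) hhol,
    hyperPoly_residue_eq_zero n hn p α hp hroots hplast hα hαlast k, mul_zero, mul_zero]

/-- Let `n ≥ 1`, let `p 1, …, p n` be the `n` distinct complex roots of `f_n`, set
`α j = 1/n` for `j = 1, …, n`, `α (n+1) = −1`, `p (n+1) = 1`, and for each `k` let
`r k > 0` be small enough that the closed disc of radius `r k` about `p k` contains
none of the other points `p j` and not `0`.  Then for every `k`, the circle integral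
`∮_{|z−p_k|=r_k} z·(∑_j α_j/(z−p_j))² dz = 0`. -/
theorem stmt_16 (n : ℕ) (hn : 1 ≤ n)
    (p : Fin (n + 1) → ℂ) (α : Fin (n + 1) → ℂ)
    (hp : Function.Injective p)
    (hroots : hyperPoly n
      = ∏ j ∈ Finset.univ.erase (Fin.last n), (Polynomial.X - Polynomial.C (p j)))
    (hplast : p (Fin.last n) = 1)
    (hα : ∀ j : Fin (n + 1), j ≠ Fin.last n → α j = 1 / (n : ℂ))
    (hαlast : α (Fin.last n) = -1)
    (r : Fin (n + 1) → ℝ) (hr : ∀ k, 0 < r k)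
    (hdisc : ∀ k j, j ≠ k → p j ∉ Metric.closedBall (p k) (r k))
    (h0disc : ∀ k, (0 : ℂ) ∉ Metric.closedBall (p k) (r k))
    (k : Fin (n + 1)) :
    (∮ z in C(p k, r k), z * (∑ j, α j / (z - p j)) ^ 2) = 0 :=
  stmt_16_general n hn p α hp hroots hplast hα hαlast r hr hdisc k
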